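/- Let s be a sesquilinear form on a finitely generated right Q-module V and let v ∈ V be such that s(v,v) ∈ K but s(v,v) ∉ k·1. Let d ≥ 1 be an integer, let x₀, …, x_{d−1} ∈ Q, and set ξ = (t^d + x_{d−1}·t^{d−1} + ⋯ + x₁·t + x₀)·ε ∈ 𝓘. If deg a(ξ, s(v,v)·ξ) ≤ 2d − 1, then x_{d−1} ∈ K. -/

import Mathlib

/-!
Write `x_i = y_i + z_i·j` with `y_i, z_i ∈ K`. Since `j·ε = b·t⁻¹·ε`, the coordinate `f` of
`ξ = f·ε` is `t^d` plus terms of smaller order at infinity, while `σ f` has leading term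
`ι(z_{d-1})·t^d` there. With `s(v,v) = w ∈ K ∖ k` we get `a(ξ, wξ) = u·(w - ι w)·σ(f)·f`, so
if `z_{d-1} ≠ 0` its valuation at infinity is that of `t^{2d}`, which no Laurent polynomial of
degree at most `2d - 1` attains.
-/

/-- `f` is a Laurent polynomial: a finite sum `Σ y_z · t^z` with `y_z ∈ K`. -/
def IsLaurent {K : Type} [Field K] (f : RatFunc K) : Prop :=
  ∃ c : ℤ →₀ K, f = c.sum fun z y => algebraMap K (RatFunc K) y * RatFunc.X ^ z

/-- `f` is a Laurent polynomial of degree at most `n` (degree = max |z| over nonzero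
coefficients; `deg 0 = -∞`). -/
def LaurentDegLE {K : Type} [Field K] (f : RatFunc K) (n : ℕ) : Prop :=
  ∃ c : ℤ →₀ K, (∀ z : ℤ, c z ≠ 0 → |z| ≤ (n : ℤ)) ∧
    f = c.sum fun z y => algebraMap K (RatFunc K) y * RatFunc.X ^ z

/-- The value `a(f·ε, g·ε) = u·(σ(f)·g − f·σ(g))` of the alternating form `a` on `I`,
expressed through the unique representations `f·ε`, `g·ε` of its arguments. -/
noncomputable def aForm {K : Type} [Field K] (σ : RatFunc K ≃+* RatFunc K) (u : K)
    (f g : RatFunc K) : RatFunc K :=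
  algebraMap K (RatFunc K) u * (σ f * g - f * σ g)

open RatFunc WithZero

section Valuation

open scoped Classical

variable {K : Type} [Field K]

theorem inftyValuation_algebraMap_mul_le (c : K) (h : RatFunc K) :
    inftyValuation K (algebraMap K (RatFunc K) c * h) ≤ inftyValuation K h := by
  rw [map_mul]
  by_cases hc : c = 0
  · simp [hc]
  · rw [algebraMap_eq_C, inftyValuation.C K hc, one_mul]

theorem inftyValuation_algebraMap_mul {c : K} (hc : c ≠ 0) (h : RatFunc K) :
    inftyValuation K (algebraMap K (RatFunc K) c * h) = inftyValuation K h := by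
  rw [map_mul, algebraMap_eq_C, inftyValuation.C K hc, one_mul]

theorem inftyValuation_X_pow (n : ℕ) : inftyValuation K (X ^ n) = exp (n : ℤ) := by
  rw [← zpow_natCast, inftyValuation.X_zpow]

theorem inftyValuation_algebraMap_mul_X_inv_pow {β : K} (hβ : β ≠ 0) (n : ℕ) :
    inftyValuation K ((algebraMap K (RatFunc K) β * X⁻¹) ^ n) = exp (-n : ℤ) := by
  rw [map_pow, inftyValuation_algebraMap_mul hβ, ← zpow_neg_one, inftyValuation.X_zpow,
    ← exp_nsmul]
  simp

theorem inftyValuation_le_of_laurentDegLE {f : RatFunc K} {n : ℕ} (hf : LaurentDegLE f n) :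
    inftyValuation K f ≤ exp (n : ℤ) := by
  obtain ⟨c, hc, rfl⟩ := hf
  refine Valuation.map_sum_le _ fun z hz => ?_
  calc inftyValuation K (algebraMap K (RatFunc K) (c z) * X ^ z)
      ≤ inftyValuation K (X ^ z) := inftyValuation_algebraMap_mul_le _ _
    _ ≤ exp (n : ℤ) := by
      rw [inftyValuation.X_zpow, exp_le_exp]
      exact (le_abs_self z).trans (hc z (Finsupp.mem_support_iff.mp hz))

end Valuation

section EpsCoord

variable {K : Type} [Field K]

/-- The `K(t)`-coordinate of `(t^d + Σ_{i<d} (y_i + z_i·j)·t^i)·ε` on the line `K(t)·ε`,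
where `β = b`: the factor `j·t^i` contributes `z_i·(b·t⁻¹)^(i+1)` because `j·ε = b·t⁻¹·ε`. -/
noncomputable def epsCoord (β : K) {d : ℕ} (y z : Fin d → K) : RatFunc K :=
  X ^ d + ∑ i, (algebraMap K (RatFunc K) (y i) * X ^ (i : ℕ)
    + algebraMap K (RatFunc K) (z i) * (algebraMap K (RatFunc K) β * X⁻¹) ^ ((i : ℕ) + 1))

open scoped Classical in
theorem inftyValuation_epsCoord {β : K} (hβ : β ≠ 0) {d : ℕ} (y z : Fin d → K) :
    inftyValuation K (epsCoord β y z) = exp (d : ℤ) := by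
  rw [epsCoord, Valuation.map_add_eq_of_lt_left] <;> rw [inftyValuation_X_pow]
  refine Valuation.map_sum_lt _ (by simp) fun i _ => ?_
  refine (Valuation.map_add _ _ _).trans_lt (max_lt ?_ ?_)
  · refine (inftyValuation_algebraMap_mul_le _ _).trans_lt ?_
    rw [inftyValuation_X_pow, exp_lt_exp]
    exact_mod_cast i.isLt
  · refine (inftyValuation_algebraMap_mul_le _ _).trans_lt ?_
    rw [inftyValuation_algebraMap_mul_X_inv_pow hβ, exp_lt_exp]
    omega

theorem map_epsCoord {σ : RatFunc K ≃+* RatFunc K} {ι : K → K} {β : K} (hβ : β ≠ 0)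
    (hιβ : ι β = β)
    (hσC : ∀ c : K, σ (algebraMap K (RatFunc K) c) = algebraMap K (RatFunc K) (ι c))
    (hσX : σ X = algebraMap K (RatFunc K) β * X⁻¹) {d : ℕ} (y z : Fin d → K) :
    σ (epsCoord β y z) = (algebraMap K (RatFunc K) β * X⁻¹) ^ d
      + ∑ i, (algebraMap K (RatFunc K) (ι (y i)) * (algebraMap K (RatFunc K) β * X⁻¹) ^ (i : ℕ)
        + algebraMap K (RatFunc K) (ι (z i)) * X ^ ((i : ℕ) + 1)) := by
  have hσσX : σ (algebraMap K (RatFunc K) β * X⁻¹) = X := by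
    rw [map_mul, map_inv₀, hσC, hσX, hιβ, mul_inv, inv_inv, ← mul_assoc,
      mul_inv_cancel₀ ((map_ne_zero _).mpr hβ), one_mul]
  simp only [epsCoord, map_add, map_sum, map_mul, map_pow, hσC, hσσX, hσX]

open scoped Classical in
theorem inftyValuation_map_epsCoord {σ : RatFunc K ≃+* RatFunc K} {ι : K → K} {β : K}
    (hβ : β ≠ 0) (hιβ : ι β = β)
    (hσC : ∀ c : K, σ (algebraMap K (RatFunc K) c) = algebraMap K (RatFunc K) (ι c))
    (hσX : σ X = algebraMap K (RatFunc K) β * X⁻¹) {m : ℕ} (y z : Fin (m + 1) → K)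
    (hz : ι (z (Fin.last m)) ≠ 0) :
    inftyValuation K (σ (epsCoord β y z)) = exp ((m + 1 : ℕ) : ℤ) := by
  set ρ := algebraMap K (RatFunc K) β * X⁻¹
  have hsplit : σ (epsCoord β y z) = algebraMap K (RatFunc K) (ι (z (Fin.last m))) * X ^ (m + 1)
      + (ρ ^ (m + 1) + ∑ i, algebraMap K (RatFunc K) (ι (y i)) * ρ ^ (i : ℕ)
        + ∑ i : Fin m, algebraMap K (RatFunc K) (ι (z i.castSucc)) * X ^ ((i : ℕ) + 1)) := by
    rw [map_epsCoord hβ hιβ hσC hσX, Finset.sum_add_distrib, Fin.sum_univ_castSucc (n := m)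
      (fun i => algebraMap K (RatFunc K) (ι (z i)) * X ^ ((i : ℕ) + 1))]
    simp only [Fin.val_last, Fin.val_castSucc]
    ring
  have hρ : ∀ n : ℕ, inftyValuation K (ρ ^ n) < exp ((m + 1 : ℕ) : ℤ) := fun n => by
    rw [inftyValuation_algebraMap_mul_X_inv_pow hβ, exp_lt_exp]
    omega
  rw [hsplit, Valuation.map_add_eq_of_lt_left] <;>
    rw [inftyValuation_algebraMap_mul hz, inftyValuation_X_pow]
  refine (Valuation.map_add _ _ _).trans_lt (max_lt ((Valuation.map_add _ _ _).trans_lt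
    (max_lt (hρ _) (Valuation.map_sum_lt _ (by simp) fun i _ => ?_)))
    (Valuation.map_sum_lt _ (by simp) fun i _ => ?_))
  · exact (inftyValuation_algebraMap_mul_le _ _).trans_lt (hρ _)
  · refine (inftyValuation_algebraMap_mul_le _ _).trans_lt ?_
    rw [inftyValuation_X_pow, exp_lt_exp]
    omega

end EpsCoord

theorem aForm_algebraMap_mul_right {K : Type} [Field K] {σ : RatFunc K ≃+* RatFunc K}
    {ι : K → K} (hσC : ∀ c : K, σ (algebraMap K (RatFunc K) c) = algebraMap K (RatFunc K) (ι c))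
    (u w : K) (f : RatFunc K) :
    aForm σ u f (algebraMap K (RatFunc K) w * f)
      = algebraMap K (RatFunc K) (u * (w - ι w)) * (σ f * f) := by
  rw [aForm, map_mul, hσC, map_mul, map_sub]
  ring

section EpsLine

variable {K : Type} [Field K] {σ : RatFunc K ≃+* RatFunc K} {QF : Type} [Ring QF]
  {ψ : RatFunc K →+* QF} {J ε : QF}

theorem mul_eps_eq (hJf : ∀ f : RatFunc K, J * ψ f = ψ (σ f) * J)
    (hε : ε = 1 + J * ψ X⁻¹) (h : RatFunc K) :
    ψ h * ε = ψ h + ψ (h * σ X⁻¹) * J := by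
  rw [hε, mul_add, mul_one, ← mul_assoc, mul_assoc, hJf, ← mul_assoc, ← map_mul]

theorem eq_of_mul_eps_eq (hJf : ∀ f : RatFunc K, J * ψ f = ψ (σ f) * J)
    (hQFdec : ∀ q : QF, ∃! p : RatFunc K × RatFunc K, q = ψ p.1 + ψ p.2 * J)
    (hε : ε = 1 + J * ψ X⁻¹) {h h' : RatFunc K} (hh : ψ h * ε = ψ h' * ε) : h = h' := by
  obtain ⟨_, _, huniq⟩ := hQFdec (ψ h * ε)
  have e := huniq (h, h * σ X⁻¹) (mul_eps_eq hJf hε h)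
  have e' := huniq (h', h' * σ X⁻¹) (hh ▸ mul_eps_eq hJf hε h')
  exact congrArg Prod.fst (e.trans e'.symm)

theorem J_mul_eps {β : K} (hJ2 : J * J = ψ (algebraMap K (RatFunc K) β))
    (hJf : ∀ f : RatFunc K, J * ψ f = ψ (σ f) * J)
    (hσX : σ X = algebraMap K (RatFunc K) β * X⁻¹) (hε : ε = 1 + J * ψ X⁻¹) :
    J * ε = ψ (algebraMap K (RatFunc K) β * X⁻¹) * ε := by
  have hJX : ψ (algebraMap K (RatFunc K) β * X⁻¹) * J = J * ψ X := by rw [hJf, hσX]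
  rw [hε, mul_add, mul_one, ← mul_assoc, hJ2, ← map_mul, mul_add, mul_one, ← mul_assoc, hJX,
    mul_assoc, ← map_mul, mul_inv_cancel₀ X_ne_zero, map_one, mul_one, add_comm]

theorem add_mul_J_mul_X_pow_mul_eps {β : K} (hJ2 : J * J = ψ (algebraMap K (RatFunc K) β))
    (hJf : ∀ f : RatFunc K, J * ψ f = ψ (σ f) * J)
    (hσX : σ X = algebraMap K (RatFunc K) β * X⁻¹) (hε : ε = 1 + J * ψ X⁻¹) (y z : K) (n : ℕ) :
    (ψ (algebraMap K (RatFunc K) y) + ψ (algebraMap K (RatFunc K) z) * J) * ψ (X ^ n) * ε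
      = ψ (algebraMap K (RatFunc K) y * X ^ n
        + algebraMap K (RatFunc K) z * (algebraMap K (RatFunc K) β * X⁻¹) ^ (n + 1)) * ε := by
  rw [map_add, add_mul, add_mul, add_mul, ← map_mul, mul_assoc _ J, hJf, mul_assoc, mul_assoc,
    J_mul_eps hJ2 hJf hσX hε, ← mul_assoc, ← mul_assoc, ← map_mul, ← map_mul, map_pow, hσX,
    mul_assoc, ← pow_succ]

theorem monic_mul_eps_eq_epsCoord {β : K} (hJ2 : J * J = ψ (algebraMap K (RatFunc K) β))
    (hJf : ∀ f : RatFunc K, J * ψ f = ψ (σ f) * J)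
    (hσX : σ X = algebraMap K (RatFunc K) β * X⁻¹) (hε : ε = 1 + J * ψ X⁻¹)
    {d : ℕ} (y z : Fin d → K) :
    (ψ (X ^ d) + ∑ i, (ψ (algebraMap K (RatFunc K) (y i)) + ψ (algebraMap K (RatFunc K) (z i)) * J)
      * ψ (X ^ (i : ℕ))) * ε = ψ (epsCoord β y z) * ε := by
  rw [epsCoord, map_add, map_sum, add_mul, add_mul, Finset.sum_mul, Finset.sum_mul]
  congr 1
  exact Finset.sum_congr rfl fun i _ => add_mul_J_mul_X_pow_mul_eps hJ2 hJf hσX hε _ _ _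

end EpsLine

theorem subleading_coefficient_in_K
    -- k is a field, K/k a degree-2 Galois extension with nontrivial automorphism ι,
    -- b a nonzero element of k
    (k K : Type) [Field k] [Field K] [Algebra k K]
    (ι : K ≃ₐ[k] K)
    (hfix : ∀ x : K, ι x = x → ∃ c : k, algebraMap k K c = x)
    (b : k) (hb : b ≠ 0)
    -- Q = (K, ι, b) is the crossed-product quaternion k-algebra, a division ring,
    -- containing K via φ, with j·j = b, j·x = ι(x)·j, and Q = K ⊕ K·j
    (Q : Type) [DivisionRing Q] [Algebra k Q]
    (φ : K →ₐ[k] Q) (j : Q)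
    (hQdec : ∀ q : Q, ∃! p : K × K, q = φ p.1 + φ p.2 * j)
    -- σ is the automorphism of K(t) acting as ι on K with σ(t) = b·t⁻¹
    (σ : RatFunc K ≃+* RatFunc K)
    (hσK : ∀ x : K, σ (algebraMap K (RatFunc K) x) = algebraMap K (RatFunc K) (ι x))
    (hσt : σ RatFunc.X = algebraMap K (RatFunc K) (algebraMap k K b) * RatFunc.X⁻¹)
    -- Q_F = Q ⊗_k F, identified with K(t) ⊕ K(t)·j : it contains K(t) via ψ and an
    -- element J (the image of j) with J·J = b, J·ψ(f) = ψ(σ f)·J, Q_F = ψ(K(t)) ⊕ ψ(K(t))·J,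
    -- and Q embeds via φ' compatibly with φ and j
    (QF : Type) [Ring QF]
    (ψ : RatFunc K →+* QF) (J : QF)
    (hJ2 : J * J = ψ (algebraMap K (RatFunc K) (algebraMap k K b)))
    (hJf : ∀ f : RatFunc K, J * ψ f = ψ (σ f) * J)
    (hQFdec : ∀ q : QF, ∃! p : RatFunc K × RatFunc K, q = ψ p.1 + ψ p.2 * J)
    (φ' : Q →+* QF)
    (hφ'K : ∀ x : K, φ' (φ x) = ψ (algebraMap K (RatFunc K) x))
    (hφ'j : φ' j = J)
    -- u is a nonzero element of K with ι(u) = -u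
    (u : K) (hu : u ≠ 0)
    -- V is a finitely generated right Q-module and s a sesquilinear form on V
    (V : Type)
    (s : V → V → Q)
    -- ε = 1 + j·t⁻¹
    (ε : QF) (hε : ε = 1 + J * ψ RatFunc.X⁻¹)
    -- s(v,v) ∈ K but s(v,v) ∉ k·1
    (v : V) (hvK : ∃ y : K, s v v = φ y)
    (hvk : ¬ ∃ c : k, s v v = algebraMap k Q c)
    (d : ℕ) (hd : 1 ≤ d) (x : Fin d → Q)
    -- ξ = (t^d + x_{d−1}·t^{d−1} + ⋯ + x₀)·ε ∈ 𝓘, expressed as ξ = f·ε with f ∈ K(t),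
    -- and s(v,v)·ξ = g·ε
    (ξ : QF)
    (hξ : ξ = (ψ (RatFunc.X ^ d) + ∑ i : Fin d, φ' (x i) * ψ (RatFunc.X ^ (i : ℕ))) * ε)
    (f g : RatFunc K) (hf : ξ = ψ f * ε) (hg : φ' (s v v) * ξ = ψ g * ε)
    -- if deg a(ξ, s(v,v)·ξ) ≤ 2d − 1 ...
    (hdeg : LaurentDegLE (aForm σ u f g) (2 * d - 1)) :
    -- ... then x_{d−1} ∈ K
    ∃ y : K, x ⟨d - 1, by omega⟩ = φ y := by
  classical
  obtain ⟨m, rfl⟩ : ∃ m, d = m + 1 := ⟨d - 1, by omega⟩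
  obtain ⟨w, hw⟩ := hvK
  choose p hp using fun i => (hQdec (x i)).exists
  have hβ : algebraMap k K b ≠ 0 := (map_ne_zero _).mpr hb
  have hx : ∀ i, φ' (x i) = ψ (algebraMap K (RatFunc K) (p i).1)
      + ψ (algebraMap K (RatFunc K) (p i).2) * J := fun i => by
    rw [hp i, map_add, map_mul, hφ'K, hφ'K, hφ'j]
  have hf_eq : f = epsCoord (algebraMap k K b) (fun i => (p i).1) (fun i => (p i).2) :=
    eq_of_mul_eps_eq hJf hQFdec hε <| by
      rw [← hf, hξ, ← monic_mul_eps_eq_epsCoord hJ2 hJf hσt hε]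
      simp only [hx]
  have hg_eq : g = algebraMap K (RatFunc K) w * f :=
    eq_of_mul_eps_eq hJf hQFdec hε <| by rw [← hg, hw, hφ'K, hf, ← mul_assoc, ← map_mul]
  have hscalar : u * (w - ι w) ≠ 0 := by
    refine mul_ne_zero hu (sub_ne_zero.mpr fun hww => hvk ?_)
    obtain ⟨c, hc⟩ := hfix w hww.symm
    exact ⟨c, by rw [hw, ← hc, φ.commutes]⟩
  have hz : (p (Fin.last m)).2 = 0 := by
    by_contra hz
    have hle := inftyValuation_le_of_laurentDegLE hdeg
    rw [hg_eq, aForm_algebraMap_mul_right hσK, inftyValuation_algebraMap_mul hscalar, map_mul,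
      hf_eq, inftyValuation_map_epsCoord hβ (ι.commutes b) hσK hσt _ _ ((map_ne_zero ι).mpr hz),
      inftyValuation_epsCoord hβ, ← exp_add, exp_le_exp] at hle
    omega
  refine ⟨(p (Fin.last m)).1, ?_⟩
  change x (Fin.last m) = _
  rw [hp, hz, map_zero, zero_mul, add_zero]
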